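/- For two profiles of monotone, strictly convex, continuous preferences ≿^H and ≿̃^H, the aggregate demand functions coincide on all prices p ∈ ℝ^L_{++} and income profiles w ∈ ℝ^H_{++} if and only if the equilibrium price correspondences coincide on all endowment profiles e^H ∈ ℝ^{HL}_{++}. -/

import Mathlib

namespace Paper

variable {L H : ℕ}

/-- Inner product of a price vector and a commodity bundle. -/
noncomputable def dot (p x : Fin L → ℝ) : ℝ := ∑ i, p i * x i

/-- membership in the consumption set X = ℝ^L_+ -/
def nneg (x : Fin L → ℝ) : Prop := ∀ i, 0 ≤ x i

/-- strictly positive vector (interior of X, resp. p ≫ 0) -/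
def posv (x : Fin L → ℝ) : Prop := ∀ i, 0 < x i

/-- a preference relation on bundles -/
abbrev Pref (L : ℕ) := (Fin L → ℝ) → (Fin L → ℝ) → Prop

/-- strict preference x ≻ y -/
def PStrict (R : Pref L) (x y : Fin L → ℝ) : Prop := R x y ∧ ¬ R y x

/-- complete and transitive preference relation on ℝ^L_+ -/
def IsPref (R : Pref L) : Prop :=
  (∀ x y, nneg x → nneg y → R x y ∨ R y x) ∧
  (∀ x y z, R x y → R y z → R x z)

/-- monotone: u ≫ v implies u ≻ v -/
def MonoWeak (R : Pref L) : Prop :=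
  ∀ u v : Fin L → ℝ, nneg v → (∀ i, v i < u i) → PStrict R u v

/-- monotone: u ≥ v, u ≠ v implies u ≻ v -/
def MonoStrong (R : Pref L) : Prop :=
  ∀ u v : Fin L → ℝ, nneg v → (∀ i, v i ≤ u i) → u ≠ v → PStrict R u v

/-- continuity: closed upper and lower contour sets -/
def ContPref (R : Pref L) : Prop :=
  ∀ x : Fin L → ℝ, IsClosed {y | R y x} ∧ IsClosed {y | R x y}

/-- convexity: u ≿ v implies λu + (1-λ)v ≿ v -/
def PrefConvex (R : Pref L) : Prop :=
  ∀ u v : Fin L → ℝ, nneg u → nneg v → R u v →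
    ∀ l : ℝ, 0 ≤ l → l ≤ 1 → R (l • u + (1 - l) • v) v

/-- strict convexity: u ≿ v, u ≠ v implies λu + (1-λ)v ≻ v for λ ∈ (0,1) -/
def PrefStrictConvex (R : Pref L) : Prop :=
  ∀ u v : Fin L → ℝ, nneg u → nneg v → R u v → u ≠ v →
    ∀ l : ℝ, 0 < l → l < 1 → PStrict R (l • u + (1 - l) • v) v

/-- the budget set B(p) = {x ∈ ℝ^L_+ : p·x ≤ 1} -/
def Budget (p x : Fin L → ℝ) : Prop := nneg x ∧ dot p x ≤ 1

/-- x is a ≿-maximizer on the budget set B(p) (Walrasian demand) -/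
def IsDemand (R : Pref L) (p x : Fin L → ℝ) : Prop :=
  Budget p x ∧ ∀ y, Budget p y → R x y

/-- membership in the box X_r = {w : (1+r)⁻¹ 𝟙 ≤ w ≤ (1+r) 𝟙} -/
def InBox (r : ℝ) (x : Fin L → ℝ) : Prop := ∀ i, (1 + r)⁻¹ ≤ x i ∧ x i ≤ 1 + r

/-- Lipschitzian preferences in the sense of Mas-Colell (1977) -/
def Lipschitzian (R : Pref L) : Prop :=
  ∀ r : ℝ, 0 < r → ∃ K : ℝ, 0 < K ∧ ∃ ε : ℝ, 0 < ε ∧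
    ∀ x y z : Fin L → ℝ, InBox r x → InBox r y → InBox r z →
      R x y → R y x → ‖x - z‖ < ε →
      Metric.infDist x {w | R w z} ≤ K * Metric.infDist y {w | R w z}

/-- x is strictly revealed preferred to y through the first n observations:
there is a chain x ≥ x_{i_1}, p_{i_j}·x_{i_{j+1}} < p_{i_j}·x_{i_j}, x_{i_N} ≥ y -/
def RevChain (p xo : ℕ → Fin L → ℝ) (n : ℕ) (x y : Fin L → ℝ) : Prop :=
  ∃ N : ℕ, ∃ idx : Fin (N + 1) → ℕ,
    (∀ j, idx j < n) ∧
    (∀ i, xo (idx 0) i ≤ x i) ∧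
    (∀ j : Fin N, dot (p (idx j.castSucc)) (xo (idx j.succ)) <
       dot (p (idx j.castSucc)) (xo (idx j.castSucc))) ∧
    (∀ i, y i ≤ xo (idx (Fin.last N)) i)

/-- the revealed demand correspondence x^{R_n}(q) -/
def RevDemand (p xo : ℕ → Fin L → ℝ) (n : ℕ) (q : Fin L → ℝ) : Set (Fin L → ℝ) :=
  {x | nneg x ∧ dot q x = 1 ∧
    ¬ ∃ x', nneg x' ∧ dot q x' ≤ 1 ∧ RevChain p xo n x' x}

/-- the strong axiom of revealed preference for the first n observations -/
def SARP (p xo : ℕ → Fin L → ℝ) (n : ℕ) : Prop :=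
  ∀ m : ℕ, 0 < m → ∀ idx : Fin (m + 1) → ℕ, (∀ j, idx j < n) →
    (∀ j j' : Fin (m + 1), j ≠ j' → xo (idx j) ≠ xo (idx j')) →
    (∀ j : Fin m, dot (p (idx j.castSucc)) (xo (idx j.succ)) ≤
       dot (p (idx j.castSucc)) (xo (idx j.castSucc))) →
    dot (p (idx (Fin.last m))) (xo (idx 0)) >
      dot (p (idx (Fin.last m))) (xo (idx (Fin.last m)))

/-- the standard regularity package: complete, transitive, continuous,
monotone, strictly convex -/
def Regular (R : Pref L) : Prop :=
  IsPref R ∧ ContPref R ∧ MonoStrong R ∧ PrefStrictConvex R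

/-- aggregate demand d(p, w¹,…,w^H) = Σ_h f^h(p/w^h), where f^h is the
individual demand function at income 1 -/
noncomputable def aggDem (f : Fin H → (Fin L → ℝ) → (Fin L → ℝ)) (p : Fin L → ℝ) (w : Fin H → ℝ) :
    Fin L → ℝ :=
  fun i => ∑ h, f h (fun j => p j / w h) i

/-- membership in the (relatively interior) simplex Δ^{L-1} -/
def InSimplex (p : Fin L → ℝ) : Prop := posv p ∧ ∑ i, p i = 1

/-- p is a Walrasian equilibrium price for the endowment profile eprof -/
def EqPrice (f : Fin H → (Fin L → ℝ) → (Fin L → ℝ)) (eprof : Fin H → Fin L → ℝ)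
    (p : Fin L → ℝ) : Prop :=
  InSimplex p ∧ ∀ i, ∑ h, (f h (fun j => p j / dot p (eprof h)) i - eprof h i) = 0

/-- the income box W = ×_h [w̲_h, w̄_h] -/
def InW (wlo whi : Fin H → ℝ) (w : Fin H → ℝ) : Prop := ∀ h, wlo h ≤ w h ∧ w h ≤ whi h

/-- the set C_n of allocation profiles consistent with the first n observations:
adding up to aggregate demand, on the budget hyperplanes, satisfying SARP -/
def InC (p : ℕ → Fin L → ℝ) (w : ℕ → Fin H → ℝ) (D : ℕ → Fin L → ℝ) (n : ℕ)
    (xa : ℕ → Fin H → Fin L → ℝ) : Prop :=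
  (∀ k < n, ∀ h, nneg (xa k h)) ∧
  (∀ k < n, ∀ i, ∑ h, xa k h i = D k i) ∧
  (∀ k < n, ∀ h, dot (p k) (xa k h) = w k h) ∧
  (∀ h, SARP p (fun k => xa k h) n)

/-- x is equilibrium-revealed preferred to y by individual h given n observations -/
def EqRevPref (p : ℕ → Fin L → ℝ) (w : ℕ → Fin H → ℝ) (D : ℕ → Fin L → ℝ)
    (n : ℕ) (h : Fin H) (x y : Fin L → ℝ) : Prop :=
  ∀ xa : ℕ → Fin H → Fin L → ℝ, InC p w D n xa → RevChain p (fun k => xa k h) n x y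

/-- the equilibrium revealed demand correspondence x^{R^h_n}(q) -/
def EqRevDemand (p : ℕ → Fin L → ℝ) (w : ℕ → Fin H → ℝ) (D : ℕ → Fin L → ℝ)
    (n : ℕ) (h : Fin H) (q : Fin L → ℝ) : Set (Fin L → ℝ) :=
  {x | nneg x ∧ dot q x = 1 ∧
    ¬ ∃ x', nneg x' ∧ dot q x' ≤ 1 ∧ EqRevPref p w D n h x' x}

/-- Assumption 1: any preference profile distinct from R generates a different
aggregate demand at some price and income profile in ℝ^L_{++} × W -/
def Assumption1 (R : Fin H → Pref L) (f : Fin H → (Fin L → ℝ) → (Fin L → ℝ))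
    (wlo whi : Fin H → ℝ) : Prop :=
  ∀ (R' : Fin H → Pref L) (f' : Fin H → (Fin L → ℝ) → (Fin L → ℝ)),
    (∀ h, Regular (R' h) ∧ Lipschitzian (R' h)) →
    (∀ h q, posv q → IsDemand (R' h) q (f' h q)) →
    R' ≠ R →
    ∃ (pp : Fin L → ℝ) (ww : Fin H → ℝ), posv pp ∧ InW wlo whi ww ∧
      aggDem f' pp ww ≠ aggDem f pp ww

/-- the revealed approximate equilibrium correspondence P^{R_n}(e^H) -/
def RevApproxEq (p : ℕ → Fin L → ℝ) (w : ℕ → Fin H → ℝ) (D : ℕ → Fin L → ℝ)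
    (n : ℕ) (eprof : Fin H → Fin L → ℝ) : Set (Fin L → ℝ) :=
  {q | InSimplex q ∧
    ∃ xa : Fin H → Fin L → ℝ,
      (∀ h, nneg (xa h)) ∧
      (∀ h, dot q (xa h) = dot q (eprof h)) ∧
      (∀ i, ∑ h, (xa h i - eprof h i) = 0) ∧
      ¬ ∃ ya : Fin H → Fin L → ℝ,
        (∀ h, nneg (ya h)) ∧ (∀ h, dot q (ya h) = dot q (eprof h)) ∧
        (∀ h, EqRevPref p w D n h (ya h) (xa h))}

/-!
Equal aggregate demand gives equal equilibrium prices, since `p` is an equilibrium price exactly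
when aggregate demand at the incomes `p ⬝ eʰ` equals total endowment. Conversely, if
`A = d(q, v) ≫ 0`, the endowments `eʰ = (vʰ / ∑ v) • A` make `q / ∑ q` an equilibrium price of
the first profile, hence of the second, so the two aggregate demands agree wherever `A ≫ 0`.

This already pins down individual demands. Suppose `x = fʰ(q) ≠ y = f'ʰ(q)` with
`m = (x + y) / 2 ≫ 0`. A price `φ ≥ 0` supports the upper contour set of `m`, and by strict
convexity `m` is its only `φ`-cheapest point. At prices `φ + ε`, with income `(φ + ε) ⬝ m` for
`h` and `ε²` for everybody else, `h`'s demand tends to `m` and the others' to `0`; aggregate demand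
is then eventually `≫ 0`, so `h`'s demand in the second profile tends to `m` as well. But one of
`x`, `y` is always affordable there, so continuity gives `m ≿ʰ x` or `m ≿'ʰ y`, contradicting
strict convexity. If `x` and `y` share zero coordinates, lower the price of such a good `i`: by
monotonicity one of the two demands starts to consume `i` at some positive price, and just below
it the demands still differ (demand is continuous) but have fewer common zeros, which sets up an
induction.
-/

open Filter Topology

lemma _root_.MapClusterPt.prodMk_of_tendsto {α X Y : Type*} [TopologicalSpace X]
    [TopologicalSpace Y]
    {l : Filter α} {g : α → X} {F : α → Y} {a : X} {y : Y}
    (hg : Tendsto g l (𝓝 a)) (hF : MapClusterPt y l F) :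
    MapClusterPt (a, y) l (fun t => (g t, F t)) := by
  rw [mapClusterPt_iff_frequently] at hF ⊢
  intro s hs
  obtain ⟨u, hu, v, hv, huv⟩ := mem_nhds_prod_iff.1 hs
  exact ((hF v hv).and_eventually (hg hu)).mono fun t ht => huv ⟨ht.2, ht.1⟩

section Consumer

variable {R : Pref L}

lemma dot_eq_dotProduct (p x : Fin L → ℝ) : dot p x = p ⬝ᵥ x := rfl

lemma nneg_iff {x : Fin L → ℝ} : nneg x ↔ 0 ≤ x := Pi.le_def.symm

lemma posv.nneg {x : Fin L → ℝ} (hx : posv x) : nneg x := fun i => (hx i).le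

lemma posv.update {x : Fin L → ℝ} (hx : posv x) (i : Fin L) {s : ℝ} (hs : 0 < s) :
    posv (Function.update x i s) := fun j => by
  by_cases hj : j = i
  · subst hj; simpa using hs
  · simpa [Function.update_of_ne hj] using hx j

lemma dot_pos (hL : 0 < L) {p x : Fin L → ℝ} (hp : posv p) (hx : posv x) : 0 < dot p x :=
  Finset.sum_pos (fun i _ => mul_pos (hp i) (hx i)) ⟨⟨0, hL⟩, Finset.mem_univ _⟩

lemma dot_div_left (q x : Fin L → ℝ) (w : ℝ) : dot (fun j => q j / w) x = dot q x / w := by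
  simp only [dot, Finset.sum_div, div_mul_eq_mul_div]

lemma dot_update_left (q x : Fin L → ℝ) (i : Fin L) (s : ℝ) :
    dot (Function.update q i s) x = dot q x + (s - q i) * x i := by
  rw [dot_eq_dotProduct, dot_eq_dotProduct, Pi.update_eq_sub_add_single, add_dotProduct,
    sub_dotProduct, single_dotProduct, single_dotProduct]
  ring

lemma dot_add_const_left (φ x : Fin L → ℝ) (ε : ℝ) :
    dot (fun i => φ i + ε) x = dot φ x + ε * ∑ i, x i := by
  simp only [dot, add_mul, Finset.sum_add_distrib, Finset.mul_sum]

lemma dot_midpoint (p x y : Fin L → ℝ) : dot p (midpoint ℝ x y) = (dot p x + dot p y) / 2 := by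
  simp only [dot_eq_dotProduct, midpoint_eq_smul_add, invOf_eq_inv, dotProduct_smul,
    dotProduct_add, smul_eq_mul]
  ring

lemma continuous_dot : Continuous fun z : (Fin L → ℝ) × (Fin L → ℝ) => dot z.1 z.2 := by
  unfold dot; fun_prop

lemma Budget.mul_le_one {p x : Fin L → ℝ} (hp : nneg p) (hx : Budget p x) (i : Fin L) :
    p i * x i ≤ 1 :=
  (Finset.single_le_sum (f := fun j => p j * x j) (fun j _ => mul_nonneg (hp j) (hx.1 j))
    (Finset.mem_univ i)).trans hx.2

lemma convex_budget (q : Fin L → ℝ) : Convex ℝ {x | Budget q x} := by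
  intro u hu v hv a b ha hb hab
  refine ⟨nneg_iff.2 (convex_Ici (0 : Fin L → ℝ) (nneg_iff.1 hu.1) (nneg_iff.1 hv.1) ha hb hab), ?_⟩
  have hu2 : q ⬝ᵥ u ≤ 1 := hu.2
  have hv2 : q ⬝ᵥ v ≤ 1 := hv.2
  show q ⬝ᵥ (a • u + b • v) ≤ 1
  rw [dotProduct_add, dotProduct_smul, dotProduct_smul, smul_eq_mul, smul_eq_mul]
  nlinarith

lemma Budget.or_of_midpoint {p x y : Fin L → ℝ} (hx : nneg x) (hy : nneg y)
    (h : dot p (midpoint ℝ x y) ≤ 1) : Budget p x ∨ Budget p y := by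
  rw [dot_midpoint] at h
  rcases le_or_gt (dot p x) 1 with hpx | hpx
  · exact Or.inl ⟨hx, hpx⟩
  · exact Or.inr ⟨hy, by linarith⟩

theorem IsDemand.dot_eq_one (hL : 0 < L) (hmono : MonoStrong R) {q x : Fin L → ℝ}
    (hq : posv q) (hx : IsDemand R q x) : dot q x = 1 := by
  by_contra hne
  set i : Fin L := ⟨0, hL⟩
  set δ := (1 - dot q x) / q i
  have hδ : 0 < δ := div_pos (by linarith [lt_of_le_of_ne hx.1.2 hne]) (hq i)
  have hx' : dot q (x + Pi.single i δ) = 1 := by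
    rw [dot_eq_dotProduct, dotProduct_add, dotProduct_single, ← dot_eq_dotProduct,
      mul_div_cancel₀ _ (hq i).ne']
    ring
  have hle : x ≤ x + Pi.single i δ := le_add_of_nonneg_right (Pi.single_nonneg.2 hδ.le)
  have hne : x + Pi.single i δ ≠ x := by simpa using hδ.ne'
  refine (hmono _ x hx.1.1 (Pi.le_def.1 hle) hne).2 (hx.2 _ ⟨?_, hx'.le⟩)
  exact nneg_iff.2 ((nneg_iff.1 hx.1.1).trans hle)

theorem IsDemand.dot_div_eq (hL : 0 < L) (hmono : MonoStrong R) {q x : Fin L → ℝ} {w : ℝ}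
    (hq : posv q) (hw : 0 < w) (hx : IsDemand R (fun j => q j / w) x) : dot q x = w := by
  have := hx.dot_eq_one hL hmono fun j => div_pos (hq j) hw
  rwa [dot_div_left, div_eq_one_iff_eq hw.ne'] at this

theorem IsDemand.unique (hconv : PrefStrictConvex R) {q x y : Fin L → ℝ}
    (hx : IsDemand R q x) (hy : IsDemand R q y) : x = y := by
  by_contra hne
  have hmid := hconv x y hx.1.1 hy.1.1 (hx.2 y hy.1) hne (1 / 2) (by norm_num) (by norm_num)
  exact hmid.2 (hy.2 _ (convex_budget q hx.1 hy.1 (by norm_num) (by norm_num) (by norm_num)))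

theorem IsDemand.pStrict (hpref : IsPref R) (hconv : PrefStrictConvex R) {q x m : Fin L → ℝ}
    (hx : IsDemand R q x) (hm : Budget q m) (hne : m ≠ x) : PStrict R x m :=
  ⟨hx.2 m hm, fun hmx => hne (IsDemand.unique hconv
    ⟨hm, fun y hy => hpref.2 m x y hmx (hx.2 y hy)⟩ hx)⟩

lemma isClosed_budget_graph :
    IsClosed {z : (Fin L → ℝ) × (Fin L → ℝ) | Budget z.1 z.2} := by
  have h : {z : (Fin L → ℝ) × (Fin L → ℝ) | Budget z.1 z.2} =
      Prod.snd ⁻¹' Set.Ici 0 ∩ {z | dot z.1 z.2 ≤ 1} := by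
    ext z; simp [Budget, nneg_iff]
  rw [h]
  exact (isClosed_Ici.preimage continuous_snd).inter (isClosed_le continuous_dot continuous_const)

theorem isDemand_of_mapClusterPt (hcont : ContPref R) {F : (Fin L → ℝ) → (Fin L → ℝ)}
    {p y : Fin L → ℝ} (hF : ∀ᶠ q in 𝓝 p, IsDemand R q (F q)) (hy : MapClusterPt y (𝓝 p) F) :
    IsDemand R p y := by
  have hstrict : ∀ u, nneg u → dot p u < 1 → R y u := by
    intro u hu hlt
    have hev : ∀ᶠ q in 𝓝 p, dot q u < 1 :=
      (continuous_dot.comp (continuous_id.prodMk continuous_const)).continuousAt.eventually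
        (eventually_lt_nhds hlt)
    exact (hcont u).1.mem_of_mapClusterPt hy ((hF.and hev).mono fun q hq => hq.1.2 u ⟨hu, hq.2.le⟩)
  refine ⟨isClosed_budget_graph.mem_of_mapClusterPt (hy.prodMk_of_tendsto tendsto_id)
    (hF.mono fun q hq => hq.1), fun u hu => ?_⟩
  have hlim : Tendsto (fun a : ℝ => a • u) (𝓝[<] 1) (𝓝 u) := by
    simpa using ((tendsto_id (x := 𝓝 (1 : ℝ))).smul_const u).mono_left nhdsWithin_le_nhds
  refine (hcont y).2.mem_of_tendsto hlim ?_
  filter_upwards [Ioo_mem_nhdsLT (show (0 : ℝ) < 1 by norm_num)] with a ha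
  refine hstrict _ (fun i => mul_nonneg ha.1.le (hu.1 i)) ?_
  rw [dot_eq_dotProduct, dotProduct_smul, smul_eq_mul, ← dot_eq_dotProduct]
  calc a * dot p u ≤ a * 1 := mul_le_mul_of_nonneg_left hu.2 ha.1.le
    _ < 1 := by linarith [ha.2]

theorem continuousAt_demand (hreg : Regular R) {F : (Fin L → ℝ) → (Fin L → ℝ)}
    (hF : ∀ q, posv q → IsDemand R q (F q)) {p : Fin L → ℝ} (hp : posv p) :
    ContinuousAt F p := by
  have hnear : ∀ᶠ q in 𝓝 p, ∀ i, p i / 2 < q i := eventually_all.2 fun i =>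
    (continuous_apply i).continuousAt.eventually (eventually_gt_nhds (half_lt_self (hp i)))
  have hpos : ∀ᶠ q in 𝓝 p, posv q := hnear.mono fun q hq i => (half_pos (hp i)).trans (hq i)
  refine isCompact_Icc.tendsto_nhds_of_unique_mapClusterPt (s := Set.Icc 0 fun i => 2 / p i)
    ?_ fun y _ hy => (isDemand_of_mapClusterPt hreg.2.1 (hpos.mono hF) hy).unique hreg.2.2.2
      (hF p hp)
  filter_upwards [hnear, hpos] with q hq hqpos
  have hd := hF q hqpos
  refine ⟨nneg_iff.1 hd.1.1, fun i => ?_⟩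
  have h1 := hd.1.mul_le_one hqpos.nneg i
  rw [le_div_iff₀ (hp i)]
  nlinarith [hq i, hd.1.1 i]

theorem continuousAt_demand_update (hreg : Regular R) {F : (Fin L → ℝ) → (Fin L → ℝ)}
    (hF : ∀ q, posv q → IsDemand R q (F q)) {q : Fin L → ℝ} (hq : posv q) (i : Fin L) {t : ℝ}
    (ht : 0 < t) : ContinuousAt (fun s => F (Function.update q i s)) t :=
  (continuousAt_demand hreg hF (hq.update i ht)).comp
    (continuous_const.update i continuous_id).continuousAt

theorem PrefStrictConvex.prefConvex (hpref : IsPref R) (hconv : PrefStrictConvex R) :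
    PrefConvex R := by
  intro u v hu hv huv a ha0 ha1
  have hvv : R v v := (hpref.1 v v hv hv).elim id id
  rcases ha0.eq_or_lt with rfl | ha0
  · simpa using hvv
  rcases ha1.eq_or_lt with rfl | ha1
  · simpa using huv
  by_cases heq : u = v
  · subst heq
    simpa [← add_smul] using hvv
  exact (hconv u v hu hv huv heq a ha0 ha1).1

theorem convex_upperContour (hpref : IsPref R) (hconv : PrefConvex R) (m : Fin L → ℝ) :
    Convex ℝ {z | nneg z ∧ R z m} := by
  intro u hu v hv a b ha hb hab
  refine ⟨nneg_iff.2 (convex_Ici (0 : Fin L → ℝ) (nneg_iff.1 hu.1) (nneg_iff.1 hv.1) ha hb hab),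
    ?_⟩
  obtain rfl : b = 1 - a := by linarith
  rcases hpref.1 u v hu.1 hv.1 with huv | hvu
  · exact hpref.2 _ _ _ (hconv u v hu.1 hv.1 huv a ha (by linarith)) hv.2
  · have h := hconv v u hv.1 hu.1 hvu (1 - a) hb (by linarith)
    rw [sub_sub_cancel, add_comm] at h
    exact hpref.2 _ _ _ h hu.2

lemma isClosed_upperContour (hcont : ContPref R) (m : Fin L → ℝ) :
    IsClosed {z | nneg z ∧ R z m} := by
  have h : {z | nneg z ∧ R z m} = Set.Ici 0 ∩ {z | R z m} := by
    ext z; simp [nneg_iff]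
  exact h ▸ isClosed_Ici.inter (hcont m).1

theorem exists_nneg_price_supporting {U : Set (Fin L → ℝ)} (hU : Convex ℝ U) {m : Fin L → ℝ}
    (hm : m ∈ U) (hdisj : ∀ z ∈ U, ¬ ∀ i, z i < m i) :
    ∃ φ : Fin L → ℝ, nneg φ ∧ φ ≠ 0 ∧ ∀ z ∈ U, dot φ m ≤ dot φ z := by
  obtain ⟨ℓ, c, hS, hcU⟩ := geometric_hahn_banach_open (convex_pi fun i _ => convex_Iio (m i))
    (isOpen_set_pi Set.finite_univ fun i _ => isOpen_Iio) hU
    (Set.disjoint_left.2 fun z hzS hzU => hdisj z hzU fun i => hzS i (Set.mem_univ i))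
  set φ : Fin L → ℝ := fun i => ℓ fun j => if i = j then 1 else 0
  have hrep : ∀ z, ℓ z = dot φ z := fun z => by
    have h := LinearMap.pi_apply_eq_sum_univ (ℓ : (Fin L → ℝ) →ₗ[ℝ] ℝ) z
    rw [ContinuousLinearMap.coe_coe] at h
    rw [h]
    exact Finset.sum_congr rfl fun i _ => mul_comm _ _
  -- `m + v` is the limit of the points `m + v - δ • 1` of the open box below `m`
  have hclosure : ∀ v : Fin L → ℝ, v ≤ 0 → ℓ (m + v) ≤ c := by
    intro v hv
    have hlim : Tendsto (fun δ : ℝ => ℓ (m + v - δ • 1)) (𝓝[>] 0) (𝓝 (ℓ (m + v))) :=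
      ((show Continuous fun δ : ℝ => ℓ (m + v - δ • 1) by fun_prop).tendsto' 0 _
        (by simp)).mono_left nhdsWithin_le_nhds
    refine le_of_tendsto hlim (eventually_nhdsWithin_of_forall fun δ hδ => (hS _ fun i _ => ?_).le)
    have hvi : v i ≤ 0 := hv i
    simp only [Pi.add_apply, Pi.sub_apply, Pi.smul_apply, Pi.one_apply, smul_eq_mul, mul_one,
      Set.mem_Iio]
    linarith [Set.mem_Ioi.1 hδ]
  refine ⟨φ, fun i => ?_, ?_, fun z hz => ?_⟩
  · have h := hclosure (-fun j => if i = j then 1 else 0) fun j => by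
      by_cases hij : i = j <;> simp [hij]
    have hcm := hcU m hm
    rw [map_add, map_neg] at h
    linarith
  · intro h0
    have h1 := hS (m - 1) fun i _ => by simp
    have h2 := hcU m hm
    rw [hrep, h0] at h1 h2
    simp only [dot, Pi.zero_apply, zero_mul, Finset.sum_const_zero] at h1 h2
    linarith
  · rw [← hrep, ← hrep]
    exact (by simpa using hclosure 0 le_rfl : ℓ m ≤ c).trans (hcU z hz)

theorem exists_price_supporting_upperContour (hL : 0 < L) (hreg : Regular R) {m : Fin L → ℝ}
    (hm : nneg m) :
    ∃ φ : Fin L → ℝ, nneg φ ∧ φ ≠ 0 ∧ ∀ z, nneg z → R z m → dot φ m ≤ dot φ z := by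
  obtain ⟨hpref, -, hmono, hconv⟩ := hreg
  obtain ⟨φ, hφ, hφ0, hsupp⟩ := exists_nneg_price_supporting
    (convex_upperContour hpref (hconv.prefConvex hpref) m) ⟨hm, (hpref.1 m m hm hm).elim id id⟩
    fun z hz hlt => (hmono m z hz.1 (fun i => (hlt i).le)
      fun he => (hlt ⟨0, hL⟩).ne (congrFun he ⟨0, hL⟩).symm).2 hz.2
  exact ⟨φ, hφ, hφ0, fun z hz hzm => hsupp z ⟨hz, hzm⟩⟩

theorem eq_of_dot_le_of_supporting (hreg : Regular R) {m φ z : Fin L → ℝ} (hm : posv m)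
    (hφ : nneg φ) (hφ0 : φ ≠ 0) (hsupp : ∀ z, nneg z → R z m → dot φ m ≤ dot φ z)
    (hz : nneg z) (hzm : R z m) (hle : dot φ z ≤ dot φ m) : z = m := by
  obtain ⟨hpref, hcont, -, hconv⟩ := hreg
  by_contra hne
  obtain ⟨k, hk⟩ : ∃ k, 0 < φ k := by
    by_contra! h
    exact hφ0 (funext fun i => le_antisymm (h i) (hφ i))
  set mid := (1 / 2 : ℝ) • z + (1 - 1 / 2 : ℝ) • m
  have hmid : ¬ R m mid := (hconv z m hz hm.nneg hzm hne _ (by norm_num) (by norm_num)).2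
  have hmidk : 0 < mid k := by
    simp only [mid, Pi.add_apply, Pi.smul_apply, smul_eq_mul]
    linarith [hz k, hm k]
  -- bundles near `mid` are still strictly better than `m`, so `mid` can be made cheaper
  have hlim : Tendsto (fun δ : ℝ => mid - δ • Pi.single k 1) (𝓝[>] 0) (𝓝 mid) :=
    ((show Continuous fun δ : ℝ => mid - δ • Pi.single k 1 by fun_prop).tendsto' 0 _
      (by simp)).mono_left nhdsWithin_le_nhds
  obtain ⟨δ, hδR, hδ⟩ := ((hlim.eventually ((hcont m).2.isOpen_compl.mem_nhds hmid)).and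
    (Ioo_mem_nhdsGT hmidk)).exists
  have hy : nneg (mid - δ • Pi.single k 1) := fun i => by
    by_cases hik : i = k
    · subst hik
      simp only [Pi.sub_apply, Pi.smul_apply, Pi.single_eq_same, smul_eq_mul, mul_one]
      linarith [hδ.2]
    · simp only [Pi.sub_apply, Pi.smul_apply, Pi.single_eq_of_ne hik, mid,
        Pi.add_apply, smul_eq_mul]
      linarith [hz i, hm i]
  have h := hsupp _ hy ((hpref.1 _ m hy hm.nneg).resolve_right hδR)
  simp only [dot_eq_dotProduct, dotProduct_sub, dotProduct_smul, dotProduct_add, dotProduct_single,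
    smul_eq_mul, mid] at h hle
  nlinarith [hδ.1]

theorem tendsto_demand_of_supporting (hL : 0 < L) (hreg : Regular R)
    {F : (Fin L → ℝ) → (Fin L → ℝ)} (hF : ∀ q, posv q → IsDemand R q (F q))
    {m φ : Fin L → ℝ} (hm : posv m) (hφ : nneg φ) (hφ0 : φ ≠ 0)
    (hsupp : ∀ z, nneg z → R z m → dot φ m ≤ dot φ z) :
    Tendsto (fun ε : ℝ => F fun j => (φ j + ε) / dot (fun i => φ i + ε) m) (𝓝[>] 0) (𝓝 m) := by
  set z := fun ε : ℝ => F fun j => (φ j + ε) / dot (fun i => φ i + ε) m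
  have key : ∀ ε > 0, nneg (z ε) ∧ R (z ε) m ∧ ∑ i, z ε i ≤ ∑ i, m i ∧
      dot φ (z ε) ≤ dot φ m + ε * ∑ i, m i := by
    intro ε hε
    have hq : posv fun i => φ i + ε := fun i => by linarith [hφ i]
    have hw := dot_pos hL hq hm
    have hd := hF _ fun j => div_pos (hq j) hw
    have hzm : R (z ε) m := hd.2 m ⟨hm.nneg, by rw [dot_div_left, div_self hw.ne']⟩
    have hwal : dot (fun i => φ i + ε) (z ε) = dot (fun i => φ i + ε) m :=
      hd.dot_div_eq hL hreg.2.2.1 hq hw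
    have hsup := hsupp _ hd.1.1 hzm
    rw [dot_add_const_left φ (z ε), dot_add_const_left φ m] at hwal
    have hzsum : 0 ≤ ∑ i, z ε i := Finset.sum_nonneg fun i _ => hd.1.1 i
    refine ⟨hd.1.1, hzm, ?_, by nlinarith⟩
    by_contra! h
    nlinarith
  refine isCompact_Icc.tendsto_nhds_of_unique_mapClusterPt (s := Set.Icc 0 fun _ => ∑ i, m i)
    ?_ fun y _ hy => ?_
  · filter_upwards [self_mem_nhdsWithin] with ε hε
    obtain ⟨hz, -, hsum, -⟩ := key ε hε
    exact ⟨nneg_iff.1 hz, fun i => (Finset.single_le_sum (fun j _ => hz j)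
      (Finset.mem_univ i)).trans hsum⟩
  have hU := (isClosed_upperContour hreg.2.1 m).mem_of_mapClusterPt hy
    (eventually_nhdsWithin_of_forall fun ε hε => ⟨(key ε hε).1, (key ε hε).2.1⟩)
  have hC : IsClosed {p : ℝ × (Fin L → ℝ) | dot φ p.2 ≤ dot φ m + p.1 * ∑ i, m i} :=
    isClosed_le (continuous_dot.comp (continuous_const.prodMk continuous_snd)) (by fun_prop)
  have hle : dot φ y ≤ dot φ m + 0 * ∑ i, m i := hC.mem_of_mapClusterPt
    (hy.prodMk_of_tendsto (tendsto_nhdsWithin_of_tendsto_nhds tendsto_id))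
    (eventually_nhdsWithin_of_forall fun ε hε => (key ε hε).2.2.2)
  rw [zero_mul, add_zero] at hle
  exact eq_of_dot_le_of_supporting hreg hm hφ hφ0 hsupp hU.1 hU.2 hle

theorem rel_of_tendsto_of_frequently_budget {α : Type*} (hcont : ContPref R)
    {l : Filter α} {p z : α → Fin L → ℝ} {m y : Fin L → ℝ} (hz : Tendsto z l (𝓝 m))
    (hd : ∀ᶠ t in l, IsDemand R (p t) (z t)) (hy : ∃ᶠ t in l, Budget (p t) y) : R m y :=
  (hcont y).1.mem_of_frequently_of_tendsto ((hy.and_eventually hd).mono fun _ ht => ht.2.2 y ht.1)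
    hz

theorem IsDemand.update_of_zero {q x : Fin L → ℝ} {i : Fin L} {s : ℝ} (hx : IsDemand R q x)
    (hxi : x i = 0) (hs : q i ≤ s) : IsDemand R (Function.update q i s) x := by
  refine ⟨⟨hx.1.1, by simpa [dot_update_left, hxi] using hx.1.2⟩, fun y hy => hx.2 y ⟨hy.1, ?_⟩⟩
  have h := hy.2
  rw [dot_update_left] at h
  nlinarith [hy.1 i]

theorem demand_update_eq_of_le (hconv : PrefStrictConvex R) {F : (Fin L → ℝ) → (Fin L → ℝ)}
    (hF : ∀ q, posv q → IsDemand R q (F q)) {q : Fin L → ℝ} (hq : posv q) {i : Fin L}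
    {s σ : ℝ} (hs : 0 < s) (hsσ : s ≤ σ) (hzero : F (Function.update q i s) i = 0) :
    F (Function.update q i σ) = F (Function.update q i s) := by
  have h := (hF _ (hq.update i hs)).update_of_zero hzero (by simpa using hsσ)
  rw [Function.update_idem] at h
  exact (hF _ (hq.update i (hs.trans_le hsσ))).unique hconv h

theorem eventually_not_isDemand_update (hL : 0 < L) (hreg : Regular R) {q x : Fin L → ℝ}
    (hq : posv q) (hx : IsDemand R q x) {i : Fin L} (hxi : x i = 0) :
    ∀ᶠ s in 𝓝[>] 0, ¬ IsDemand R (Function.update q i s) x := by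
  obtain ⟨-, hcont, hmono, -⟩ := hreg
  have hdot := hx.dot_eq_one hL hmono hq
  obtain ⟨k, hk⟩ : ∃ k, 0 < x k := by
    by_contra! h
    have : dot q x ≤ 0 :=
      Finset.sum_nonpos fun j _ => mul_nonpos_of_nonneg_of_nonpos (hq j).le (h j)
    linarith
  have hki : k ≠ i := fun h => by simp [h, hxi] at hk
  -- a little more of good `i`, paid for by giving up some of good `k`
  set y : ℝ → Fin L → ℝ := fun s => x + Pi.single i 1 - Pi.single k (s / q k)
  have hbetter : ¬ R x (x + Pi.single i 1) :=
    (hmono _ x hx.1.1 (fun j => by by_cases hj : j = i <;> simp [hj])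
      (by simp)).2
  have hlim : Tendsto y (𝓝[>] 0) (𝓝 (x + Pi.single i 1)) :=
    ((continuous_const.sub ((continuous_single k).comp
    (continuous_id.div_const (q k)))).tendsto' 0 _ (by simp)).mono_left nhdsWithin_le_nhds
  filter_upwards [hlim.eventually ((hcont x).2.isOpen_compl.mem_nhds hbetter),
    Ioo_mem_nhdsGT (mul_pos (hq k) hk)] with s hs hsk hd
  refine hs (hd.2 (y s) ⟨fun j => ?_, le_of_eq ?_⟩)
  · have hsk' : s / q k ≤ x k := by rw [div_le_iff₀ (hq k)]; linarith [hsk.2]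
    by_cases hjk : j = k
    · subst hjk
      simp only [y, Pi.sub_apply, Pi.add_apply, Pi.single_eq_of_ne hki, add_zero,
        Pi.single_eq_same]
      linarith
    · by_cases hji : j = i
      · subst hji
        simp only [y, Pi.sub_apply, Pi.add_apply, Pi.single_eq_same, Pi.single_eq_of_ne hjk,
          sub_zero]
        linarith [hx.1.1 j]
      · simp [y, Pi.single_eq_of_ne hjk, Pi.single_eq_of_ne hji, hx.1.1 j]
  · simp only [y, dot_eq_dotProduct, dotProduct_sub, dotProduct_add, dotProduct_single]
    rw [← dot_eq_dotProduct, dot_update_left, hdot, hxi, Function.update_self,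
      Function.update_of_ne hki, mul_div_cancel₀ _ (hq k).ne']
    ring

end Consumer

noncomputable def commonZeros (x y : Fin L → ℝ) : Finset (Fin L) :=
  Finset.univ.filter fun i => x i = 0 ∧ y i = 0

lemma mem_commonZeros {x y : Fin L → ℝ} {i : Fin L} :
    i ∈ commonZeros x y ↔ x i = 0 ∧ y i = 0 := by
  simp [commonZeros]

lemma posv_add_of_commonZeros_eq_empty {x y : Fin L → ℝ} (hx : nneg x) (hy : nneg y)
    (h : commonZeros x y = ∅) : posv (x + y) := fun i => by
  have hi : ¬ (x i = 0 ∧ y i = 0) := fun hi => by simpa [h] using mem_commonZeros.2 hi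
  rcases (hx i).eq_or_lt with hxi | hxi
  · have := (hy i).lt_of_ne fun hyi => hi ⟨hxi.symm, hyi.symm⟩
    simp only [Pi.add_apply]; linarith
  · simp only [Pi.add_apply]; linarith [hy i]

lemma eventually_commonZeros_subset {α : Type*} {l : Filter α} {a b : α → Fin L → ℝ}
    {x y : Fin L → ℝ} (ha : Tendsto a l (𝓝 x)) (hb : Tendsto b l (𝓝 y)) :
    ∀ᶠ t in l, commonZeros (a t) (b t) ⊆ commonZeros x y := by
  have hj : ∀ j, ∀ᶠ t in l, j ∈ commonZeros (a t) (b t) → j ∈ commonZeros x y := by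
    intro j
    by_cases hxj : x j = 0
    · by_cases hyj : y j = 0
      · exact Eventually.of_forall fun _ _ => mem_commonZeros.2 ⟨hxj, hyj⟩
      · exact ((tendsto_pi_nhds.1 hb j).eventually_ne hyj).mono fun t ht hj =>
          absurd (mem_commonZeros.1 hj).2 ht
    · exact ((tendsto_pi_nhds.1 ha j).eventually_ne hxj).mono fun t ht hj =>
        absurd (mem_commonZeros.1 hj).1 ht
  filter_upwards [eventually_all.2 hj] with t ht j hjt using ht j hjt

theorem exists_price_threshold_of_mem_commonZeros (hL : 0 < L) {R R' : Pref L}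
    (hreg : Regular R) (hreg' : Regular R') {F F' : (Fin L → ℝ) → (Fin L → ℝ)}
    (hF : ∀ q, posv q → IsDemand R q (F q)) (hF' : ∀ q, posv q → IsDemand R' q (F' q))
    {q : Fin L → ℝ} (hq : posv q) {i : Fin L} (hi : i ∈ commonZeros (F q) (F' q)) :
    ∃ t, 0 < t ∧ F (Function.update q i t) = F q ∧ F' (Function.update q i t) = F' q ∧
      ∀ s, 0 < s → s < t →
        i ∉ commonZeros (F (Function.update q i s)) (F' (Function.update q i s)) := by
  set p : ℝ → Fin L → ℝ := fun s => Function.update q i s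
  have hpq : p (q i) = q := Function.update_eq_self i q
  set T : Set ℝ := {s | 0 < s ∧ s ≤ q i ∧ i ∈ commonZeros (F (p s)) (F' (p s))}
  have hqT : q i ∈ T := ⟨hq i, le_rfl, by rwa [hpq]⟩
  have hTeq : ∀ s ∈ T, F (p s) = F q ∧ F' (p s) = F' q := by
    rintro s ⟨hs, hsq, hsi⟩
    rw [← hpq]
    exact ⟨(demand_update_eq_of_le hreg.2.2.2 hF hq hs hsq (mem_commonZeros.1 hsi).1).symm,
      (demand_update_eq_of_le hreg'.2.2.2 hF' hq hs hsq (mem_commonZeros.1 hsi).2).symm⟩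
  have hTbdd : BddBelow T := ⟨0, fun s hs => hs.1.le⟩
  have hsq : sInf T ≤ q i := csInf_le hTbdd hqT
  have hspos : 0 < sInf T := by
    obtain ⟨u, hu, hsub⟩ := mem_nhdsGT_iff_exists_Ioo_subset.1
      (eventually_not_isDemand_update hL hreg hq (hF q hq) (mem_commonZeros.1 hi).1)
    refine hu.trans_le (le_csInf ⟨q i, hqT⟩ fun s hsT => not_lt.1 fun hsu => ?_)
    exact hsub ⟨hsT.1, hsu⟩ ((hTeq s hsT).1 ▸ hF _ (hq.update i hsT.1))
  have hstar : F (p (sInf T)) = F q ∧ F' (p (sInf T)) = F' q := by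
    rcases hsq.eq_or_lt with heq | hlt
    · rw [heq, hpq]
      exact ⟨rfl, rfl⟩
    -- `T` is an interval up to `q i`, and the demands are continuous at its infimum
    have hev : ∀ᶠ σ in 𝓝[>] sInf T, σ ∈ T := by
      filter_upwards [Ioo_mem_nhdsGT hlt] with σ hσ
      obtain ⟨s, ⟨hs, -, hsi⟩, hsσ⟩ := (csInf_lt_iff hTbdd ⟨q i, hqT⟩).1 hσ.1
      refine ⟨hs.trans hsσ, hσ.2.le, ?_⟩
      rwa [demand_update_eq_of_le hreg.2.2.2 hF hq hs hsσ.le (mem_commonZeros.1 hsi).1,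
        demand_update_eq_of_le hreg'.2.2.2 hF' hq hs hsσ.le (mem_commonZeros.1 hsi).2]
    exact ⟨tendsto_nhds_unique
        ((continuousAt_demand_update hreg hF hq i hspos).tendsto.mono_left nhdsWithin_le_nhds)
        (tendsto_const_nhds.congr' (hev.mono fun σ hσ => (hTeq σ hσ).1.symm)),
      tendsto_nhds_unique
        ((continuousAt_demand_update hreg' hF' hq i hspos).tendsto.mono_left nhdsWithin_le_nhds)
        (tendsto_const_nhds.congr' (hev.mono fun σ hσ => (hTeq σ hσ).2.symm))⟩
  exact ⟨sInf T, hspos, hstar.1, hstar.2, fun s hs hlt hsi =>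
    (csInf_le hTbdd ⟨hs, (hlt.trans_le hsq).le, hsi⟩).not_gt hlt⟩

theorem exists_price_commonZeros_ssubset (hL : 0 < L) {R R' : Pref L} (hreg : Regular R)
    (hreg' : Regular R') {F F' : (Fin L → ℝ) → (Fin L → ℝ)}
    (hF : ∀ q, posv q → IsDemand R q (F q)) (hF' : ∀ q, posv q → IsDemand R' q (F' q))
    {q : Fin L → ℝ} (hq : posv q) (hne : F q ≠ F' q) {i : Fin L}
    (hi : i ∈ commonZeros (F q) (F' q)) :
    ∃ q', posv q' ∧ F q' ≠ F' q' ∧ commonZeros (F q') (F' q') ⊂ commonZeros (F q) (F' q) := by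
  obtain ⟨t, ht, hFt, hF't, hbelow⟩ :=
    exists_price_threshold_of_mem_commonZeros hL hreg hreg' hF hF' hq hi
  have hlim : Tendsto (fun s => F (Function.update q i s)) (𝓝[<] t) (𝓝 (F q)) :=
    hFt ▸ (continuousAt_demand_update hreg hF hq i ht).tendsto.mono_left nhdsWithin_le_nhds
  have hlim' : Tendsto (fun s => F' (Function.update q i s)) (𝓝[<] t) (𝓝 (F' q)) :=
    hF't ▸ (continuousAt_demand_update hreg' hF' hq i ht).tendsto.mono_left nhdsWithin_le_nhds
  obtain ⟨s, hsne, hsub, hs⟩ := (((hlim.sub hlim').eventually_ne (sub_ne_zero.2 hne)).and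
    ((eventually_commonZeros_subset hlim hlim').and (Ioo_mem_nhdsLT ht))).exists
  exact ⟨_, hq.update i hs.1, fun h => hsne (sub_eq_zero.2 h),
    (Finset.ssubset_iff_of_subset hsub).2 ⟨i, hi, hbelow s hs.1 hs.2⟩⟩

lemma aggDem_eq_sum (f : Fin H → (Fin L → ℝ) → (Fin L → ℝ)) (q : Fin L → ℝ) (v : Fin H → ℝ) :
    aggDem f q v = ∑ g, f g fun j => q j / v g := by
  funext i
  simp [aggDem, Finset.sum_apply]

theorem tendsto_demand_of_small_income {F : (Fin L → ℝ) → (Fin L → ℝ)}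
    (hF : ∀ q, posv q → Budget q (F q)) {φ : Fin L → ℝ} (hφ : nneg φ) :
    Tendsto (fun ε : ℝ => F fun j => (φ j + ε) / ε ^ 2) (𝓝[>] 0) (𝓝 0) := by
  have hp : ∀ ε > (0 : ℝ), posv fun j => (φ j + ε) / ε ^ 2 := fun ε hε j => by
    have := hφ j
    positivity
  rw [tendsto_pi_nhds]
  intro i
  refine tendsto_of_tendsto_of_tendsto_of_le_of_le' tendsto_const_nhds
    (tendsto_nhdsWithin_of_tendsto_nhds tendsto_id) ?_ ?_
  · filter_upwards [self_mem_nhdsWithin] with ε hε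
    exact (hF _ (hp ε hε)).1 i
  · filter_upwards [self_mem_nhdsWithin] with ε (hε : 0 < ε)
    have hb := hF _ (hp ε hε)
    have h := hb.mul_le_one (hp ε hε).nneg i
    rw [div_mul_eq_mul_div, div_le_one (by positivity)] at h
    show _ ≤ ε
    nlinarith [mul_nonneg (hφ i) (hb.1 i)]

theorem tendsto_demand_of_aggDem_agree {f f' : Fin H → (Fin L → ℝ) → (Fin L → ℝ)}
    (hf : ∀ g q, posv q → Budget q (f g q)) (hf' : ∀ g q, posv q → Budget q (f' g q))
    (hagg : ∀ q v, posv q → (∀ g, 0 < v g) → posv (aggDem f q v) →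
      aggDem f q v = aggDem f' q v)
    (h : Fin H) {φ m : Fin L → ℝ} (hφ : nneg φ) (hm : posv m) {w : ℝ → ℝ}
    (hw : ∀ ε > 0, 0 < w ε)
    (hlim : Tendsto (fun ε => f h fun j => (φ j + ε) / w ε) (𝓝[>] 0) (𝓝 m)) :
    Tendsto (fun ε => f' h fun j => (φ j + ε) / w ε) (𝓝[>] 0) (𝓝 m) := by
  set v : ℝ → Fin H → ℝ := fun ε => Function.update (fun _ => ε ^ 2) h (w ε)
  have hsplit : ∀ (F : Fin H → (Fin L → ℝ) → (Fin L → ℝ)) ε,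
      aggDem F (fun i => φ i + ε) (v ε) = F h (fun j => (φ j + ε) / w ε) +
        ∑ g ∈ Finset.univ.erase h, F g fun j => (φ j + ε) / ε ^ 2 := by
    intro F ε
    rw [aggDem_eq_sum, ← Finset.add_sum_erase _ _ (Finset.mem_univ h)]
    congr 1
    · simp [v]
    · exact Finset.sum_congr rfl fun g hg => by
        simp [v, Function.update_of_ne (Finset.ne_of_mem_erase hg)]
  have hothers : ∀ F : Fin H → (Fin L → ℝ) → (Fin L → ℝ), (∀ g q, posv q → Budget q (F g q)) →
      Tendsto (fun ε => ∑ g ∈ Finset.univ.erase h, F g fun j => (φ j + ε) / ε ^ 2)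
        (𝓝[>] 0) (𝓝 0) := fun F hF => by
    have := tendsto_finsetSum (Finset.univ.erase h) fun g _ =>
      tendsto_demand_of_small_income (hF g) hφ
    rwa [Finset.sum_const_zero] at this
  have hA : Tendsto (fun ε => aggDem f (fun i => φ i + ε) (v ε)) (𝓝[>] 0) (𝓝 m) := by
    simpa [hsplit] using hlim.add (hothers f hf)
  have heq : ∀ᶠ ε in 𝓝[>] 0,
      aggDem f (fun i => φ i + ε) (v ε) = aggDem f' (fun i => φ i + ε) (v ε) := by
    have hpos : ∀ᶠ ε in 𝓝[>] 0, posv (aggDem f (fun i => φ i + ε) (v ε)) :=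
      eventually_all.2 fun i => (tendsto_pi_nhds.1 hA i).eventually (eventually_gt_nhds (hm i))
    filter_upwards [hpos, self_mem_nhdsWithin] with ε hpos (hε : 0 < ε)
    refine hagg _ _ (fun i => by linarith [hφ i]) (fun g => ?_) hpos
    by_cases hg : g = h
    · simpa [v, hg] using hw ε hε
    · simp only [v, Function.update_of_ne hg]
      positivity
  simpa [hsplit] using (hA.congr' heq).sub (hothers f' hf')

theorem demand_eq_of_posv_add (hL : 0 < L) {R R' : Fin H → Pref L}
    {f f' : Fin H → (Fin L → ℝ) → (Fin L → ℝ)}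
    (hreg : ∀ h, Regular (R h)) (hreg' : ∀ h, Regular (R' h))
    (hdem : ∀ h q, posv q → IsDemand (R h) q (f h q))
    (hdem' : ∀ h q, posv q → IsDemand (R' h) q (f' h q))
    (hagg : ∀ q v, posv q → (∀ g, 0 < v g) → posv (aggDem f q v) →
      aggDem f q v = aggDem f' q v)
    {h : Fin H} {q : Fin L → ℝ} (hq : posv q) (hpos : posv (f h q + f' h q)) :
    f h q = f' h q := by
  by_contra hne
  set x := f h q
  set y := f' h q
  set m := midpoint ℝ x y
  have hx := hdem h q hq
  have hy := hdem' h q hq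
  have hm : posv m := fun i => by
    have := hpos i
    simp only [m, midpoint_eq_smul_add, invOf_eq_inv, Pi.smul_apply, Pi.add_apply,
      smul_eq_mul] at this ⊢
    exact mul_pos (inv_pos.2 two_pos) this
  have hmq : Budget q m := ⟨hm.nneg, by
    rw [dot_midpoint, hx.dot_eq_one hL (hreg h).2.2.1 hq, hy.dot_eq_one hL (hreg' h).2.2.1 hq]
    norm_num⟩
  have hxm : PStrict (R h) x m :=
    hx.pStrict (hreg h).1 (hreg h).2.2.2 hmq fun he => hne ((midpoint_eq_left_iff ℝ).1 he)
  have hym : PStrict (R' h) y m :=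
    hy.pStrict (hreg' h).1 (hreg' h).2.2.2 hmq fun he => hne ((midpoint_eq_right_iff ℝ).1 he)
  obtain ⟨φ, hφ, hφ0, hsupp⟩ := exists_price_supporting_upperContour hL (hreg h) hm.nneg
  have hw : ∀ ε > 0, 0 < dot (fun i => φ i + ε) m := fun ε hε =>
    dot_pos hL (fun i => by linarith [hφ i]) hm
  set p : ℝ → Fin L → ℝ := fun ε j => (φ j + ε) / dot (fun i => φ i + ε) m
  have hp : ∀ᶠ ε in 𝓝[>] 0, posv (p ε) := eventually_nhdsWithin_of_forall fun ε hε j =>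
    div_pos (by linarith [hφ j, Set.mem_Ioi.1 hε]) (hw ε hε)
  have hz := tendsto_demand_of_supporting hL (hreg h) (hdem h) hm hφ hφ0 hsupp
  have hz' := tendsto_demand_of_aggDem_agree (fun g q hq => (hdem g q hq).1)
    (fun g q hq => (hdem' g q hq).1) hagg h hφ hm hw hz
  -- `m` costs exactly the income at every probe price
  have haff : ∀ᶠ ε in 𝓝[>] 0, Budget (p ε) x ∨ Budget (p ε) y := by
    filter_upwards [self_mem_nhdsWithin] with ε hε
    exact Budget.or_of_midpoint hx.1.1 hy.1.1 (by rw [dot_div_left, div_self (hw ε hε).ne'])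
  rcases frequently_or_distrib.1 haff.frequently with hfx | hfy
  · exact hxm.2 (rel_of_tendsto_of_frequently_budget (hreg h).2.1 hz
      (hp.mono fun ε hε => hdem h _ hε) hfx)
  · exact hym.2 (rel_of_tendsto_of_frequently_budget (hreg' h).2.1 hz'
      (hp.mono fun ε hε => hdem' h _ hε) hfy)

theorem demand_eq_of_aggDem_agree (hL : 0 < L) {R R' : Fin H → Pref L}
    {f f' : Fin H → (Fin L → ℝ) → (Fin L → ℝ)}
    (hreg : ∀ h, Regular (R h)) (hreg' : ∀ h, Regular (R' h))
    (hdem : ∀ h q, posv q → IsDemand (R h) q (f h q))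
    (hdem' : ∀ h q, posv q → IsDemand (R' h) q (f' h q))
    (hagg : ∀ q v, posv q → (∀ g, 0 < v g) → posv (aggDem f q v) →
      aggDem f q v = aggDem f' q v)
    (h : Fin H) {q : Fin L → ℝ} (hq : posv q) : f h q = f' h q := by
  induction hn : (commonZeros (f h q) (f' h q)).card using Nat.strong_induction_on
    generalizing q with
  | _ n ih =>
  by_contra hne
  rcases (commonZeros (f h q) (f' h q)).eq_empty_or_nonempty with hempty | ⟨i, hi⟩
  · exact hne (demand_eq_of_posv_add hL hreg hreg' hdem hdem' hagg hq
      (posv_add_of_commonZeros_eq_empty (hdem h q hq).1.1 (hdem' h q hq).1.1 hempty))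
  · obtain ⟨q', hq', hne', hss⟩ := exists_price_commonZeros_ssubset hL (hreg h) (hreg' h)
      (hdem h) (hdem' h) hq hne hi
    exact hne' (ih _ (hn ▸ Finset.card_lt_card hss) hq' rfl)

lemma eqPrice_iff {f : Fin H → (Fin L → ℝ) → (Fin L → ℝ)} {e : Fin H → Fin L → ℝ}
    {p : Fin L → ℝ} :
    EqPrice f e p ↔ InSimplex p ∧ aggDem f p (fun h => dot p (e h)) = ∑ h, e h := by
  simp only [EqPrice, Finset.sum_sub_distrib, sub_eq_zero, funext_iff, aggDem, Finset.sum_apply]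

lemma aggDem_div_div (f : Fin H → (Fin L → ℝ) → (Fin L → ℝ)) (q : Fin L → ℝ) (v : Fin H → ℝ)
    {s : ℝ} (hs : s ≠ 0) :
    aggDem f (fun j => q j / s) (fun h => v h / s) = aggDem f q v := by
  funext i
  simp only [aggDem, div_div_div_cancel_right₀ hs]

theorem aggDem_eq_of_eqPrice_imp (hL : 0 < L) {R : Fin H → Pref L}
    {f f' : Fin H → (Fin L → ℝ) → (Fin L → ℝ)} (hmono : ∀ h, MonoStrong (R h))
    (hdem : ∀ h q, posv q → IsDemand (R h) q (f h q))
    (hEq : ∀ e : Fin H → Fin L → ℝ, (∀ h, posv (e h)) → ∀ p, EqPrice f e p → EqPrice f' e p)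
    (q : Fin L → ℝ) (v : Fin H → ℝ) (hq : posv q) (hv : ∀ h, 0 < v h)
    (hA : posv (aggDem f q v)) : aggDem f q v = aggDem f' q v := by
  set A := aggDem f q v
  obtain ⟨h₀, -, -⟩ := Finset.exists_ne_zero_of_sum_ne_zero (hA ⟨0, hL⟩).ne'
  set V := ∑ h, v h
  have hV : 0 < V := Finset.sum_pos (fun h _ => hv h) ⟨h₀, Finset.mem_univ _⟩
  set s := ∑ i, q i
  have hs : 0 < s := Finset.sum_pos (fun i _ => hq i) ⟨⟨0, hL⟩, Finset.mem_univ _⟩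
  -- endowments proportional to incomes, adding up to `A`, make `q / s` an equilibrium price
  set e : Fin H → Fin L → ℝ := fun h => (v h / V) • A
  have hsum : ∑ h, e h = A := by
    rw [← Finset.sum_smul, ← Finset.sum_div, div_self hV.ne', one_smul]
  have hqA : dot q A = V := by
    rw [dot_eq_dotProduct, show A = _ from aggDem_eq_sum f q v, dotProduct_sum]
    exact Finset.sum_congr rfl fun h _ => (hdem h _ fun j => div_pos (hq j) (hv h)).dot_div_eq hL
      (hmono h) hq (hv h)
  have hincome : (fun h => dot (fun j => q j / s) (e h)) = fun h => v h / s := by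
    funext h
    rw [dot_div_left, dot_eq_dotProduct, dotProduct_smul, ← dot_eq_dotProduct, hqA, smul_eq_mul,
      div_mul_cancel₀ _ hV.ne']
  have hsimplex : InSimplex fun j => q j / s :=
    ⟨fun j => div_pos (hq j) hs, by rw [← Finset.sum_div, div_self hs.ne']⟩
  have he : ∀ h, posv (e h) := fun h i => mul_pos (div_pos (hv h) hV) (hA i)
  have h' := (eqPrice_iff.1 (hEq e he _ (eqPrice_iff.2
    ⟨hsimplex, by rw [hincome, aggDem_div_div f q v hs.ne', hsum]⟩))).2
  rw [hincome, aggDem_div_div f' q v hs.ne', hsum] at h'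
  exact h'.symm

theorem statement11_general (hL : 0 < L)
    (R R' : Fin H → Pref L)
    (f f' : Fin H → (Fin L → ℝ) → (Fin L → ℝ))
    (hreg : ∀ h, Regular (R h)) (hreg' : ∀ h, Regular (R' h))
    (hdem : ∀ h q, posv q → IsDemand (R h) q (f h q))
    (hdem' : ∀ h q, posv q → IsDemand (R' h) q (f' h q)) :
    (∀ (p : Fin L → ℝ) (ww : Fin H → ℝ), posv p → (∀ h, 0 < ww h) →
        aggDem f p ww = aggDem f' p ww) ↔
    (∀ eprof : Fin H → Fin L → ℝ, (∀ h, posv (eprof h)) →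
        ∀ p : Fin L → ℝ, EqPrice f eprof p ↔ EqPrice f' eprof p) := by
  constructor
  · intro hagg e he p
    rw [eqPrice_iff, eqPrice_iff]
    exact and_congr_right fun hp => by rw [hagg p _ hp.1 fun h => dot_pos hL hp.1 (he h)]
  · intro hEq p w hp hw
    have hagg := aggDem_eq_of_eqPrice_imp hL (fun h => (hreg h).2.2.1) hdem
      fun e he p => (hEq e he p).1
    rw [aggDem_eq_sum, aggDem_eq_sum]
    exact Finset.sum_congr rfl fun h _ => demand_eq_of_aggDem_agree hL hreg hreg' hdem hdem' hagg h
      fun j => div_pos (hp j) (hw h)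

/-- two preference profiles generate the same aggregate demand
function iff they generate the same equilibrium price correspondence. -/
theorem statement11 (hL : 0 < L) (hH : 0 < H)
    (R R' : Fin H → Pref L)
    (f f' : Fin H → (Fin L → ℝ) → (Fin L → ℝ))
    (hreg : ∀ h, Regular (R h)) (hreg' : ∀ h, Regular (R' h))
    (hdem : ∀ h q, posv q → IsDemand (R h) q (f h q))
    (hdem' : ∀ h q, posv q → IsDemand (R' h) q (f' h q)) :
    (∀ (p : Fin L → ℝ) (ww : Fin H → ℝ), posv p → (∀ h, 0 < ww h) →
        aggDem f p ww = aggDem f' p ww) ↔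
    (∀ eprof : Fin H → Fin L → ℝ, (∀ h, posv (eprof h)) →
        ∀ p : Fin L → ℝ, EqPrice f eprof p ↔ EqPrice f' eprof p) :=
  statement11_general hL R R' f f' hreg hreg' hdem hdem'

end Paper
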